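/- Let p be an odd prime, f : F_{p^n} → F_p in the class WRP (weakly regular s-plateaued, unbalanced, f(0)=0, homogeneous of even degree h with gcd(h-1,p-1)=1), so that W_f(β) = ε (√(p*))^{n+s} ξ_p^{g(β)} for β in the Walsh support, where p* = η₀(-1)p and ε = ±1. Then there exists a positive even integer l with gcd(l-1, p-1) = 1 such that g(aβ) = a^l g(β) for all a ∈ F_p^* and all β in the Walsh support. -/

import Mathlib

open Finset

noncomputable def xi (p : ℕ) (a : ZMod p) : ℂ :=
  Complex.exp (2 * Real.pi * Complex.I * (a.val : ℂ) / (p : ℂ))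

noncomputable def walsh (p : ℕ) (K : Type*) [Field K] [Fintype K] [Algebra (ZMod p) K]
    (f : K → ZMod p) (β : K) : ℂ :=
  ∑ x : K, xi p (f x - (Algebra.trace (ZMod p) K) (β * x))

noncomputable def sqrtPstar (p : ℕ) : ℂ :=
  if p % 4 = 1 then (Real.sqrt p : ℂ) else Complex.I * (Real.sqrt p : ℂ)

open scoped Classical in
noncomputable def quadChar (p : ℕ) (x : ZMod p) : ℤ :=
  if x = 0 then 0 else if IsSquare x then 1 else -1

noncomputable def setElt (K : Type*) [Field K] (D : Finset K) : AddMonoidAlgebra ℂ K :=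
  ∑ x ∈ D, AddMonoidAlgebra.single x (1 : ℂ)

noncomputable def Lt (p : ℕ) [NeZero p] (K : Type*) [Field K] [Fintype K]
    (f : K → ZMod p) (t : ZMod p) : AddMonoidAlgebra ℂ K :=
  ∑ j : ZMod p, xi p (j * t) • setElt K (Finset.univ.filter fun x => f x = j)

noncomputable def epow (p m : ℕ) : ℤ := quadChar p (-1) ^ (m / 2) * (p : ℤ) ^ (m / 2)

noncomputable def setEltZ (K : Type*) [Field K] (D : Finset K) : AddMonoidAlgebra ℤ K :=
  ∑ x ∈ D, AddMonoidAlgebra.single x (1 : ℤ)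

noncomputable def isPDS (K : Type*) [Field K] [Fintype K] (D : Finset K) (d l1 l2 : ℤ) : Prop :=
  setEltZ K D * (∑ x ∈ D, AddMonoidAlgebra.single (-x) (1 : ℤ)) =
    (d - l2) • (1 : AddMonoidAlgebra ℤ K) + (l1 - l2) • setEltZ K D +
      l2 • setEltZ K Finset.univ

/-!
Fix `a ≠ 0` and write `a = c ^ (h - 1)` with `c = a ^ k`, where `k` inverts `h - 1` modulo
`p - 1`. Substituting `x ↦ c x` in the Walsh sum and using homogeneity shows that `W_f(aβ)` is
the image of `W_f(β)` under the Galois automorphism `ζ_p ↦ ζ_p ^ t` of `ℚ(ζ_p)`, where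
`t = c ^ h = a ^ (k + 1)`. As `h` is even, `t` is a square, so this automorphism fixes the
quadratic Gauss sum and hence `√p*`; it therefore sends `ε √p*^(n+s) ζ_p^g(β)` to
`ε √p*^(n+s) ζ_p^(t g(β))`, and comparing with `W_f(aβ) = ε √p*^(n+s) ζ_p^g(aβ)` gives
`g(aβ) = a ^ (k + 1) g(β)`. The automorphism is realised on rational polynomials in `ζ_p`, which is
legitimate because `ζ_p` and `ζ_p ^ t` have the same minimal polynomial `Φ_p`.
-/

namespace ZMod
variable {N : ℕ} [NeZero N]

lemma stdAddChar_mul_eq_pow_val (t j : ZMod N) :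
    stdAddChar (t * j) = (stdAddChar (1 : ZMod N) ^ t.val) ^ j.val := by
  rw [← pow_mul, ← AddChar.map_nsmul_eq_pow, nsmul_one, Nat.cast_mul, natCast_zmod_val,
    natCast_zmod_val]

lemma isPrimitiveRoot_stdAddChar_one : IsPrimitiveRoot (stdAddChar (1 : ZMod N)) N := by
  have h := stdAddChar_coe (N := N) 1
  simp only [Int.cast_one, mul_one] at h
  exact h ▸ Complex.isPrimitiveRoot_exp N (NeZero.ne N)

lemma norm_stdAddChar (j : ZMod N) : ‖stdAddChar j‖ = 1 := Circle.norm_coe _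

end ZMod

lemma xi_eq_stdAddChar {p : ℕ} [NeZero p] (a : ZMod p) : xi p a = ZMod.stdAddChar a := by
  rw [xi, ZMod.stdAddChar_apply, ZMod.toCircle_apply]

lemma walsh_eq_sum_stdAddChar {p : ℕ} [NeZero p] {K : Type*} [Field K] [Fintype K]
    [Algebra (ZMod p) K] (f : K → ZMod p) (β : K) :
    walsh p K f β = ∑ x, ZMod.stdAddChar (f x - Algebra.trace (ZMod p) K (β * x)) := by
  simp only [walsh, xi_eq_stdAddChar]

section Walsh

variable {p : ℕ} [Fact p.Prime] {K : Type*} [Field K] [Fintype K] [Algebra (ZMod p) K]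
  {f : K → ZMod p} {h : ℕ}

lemma walsh_algebraMap_pow_mul
    (hhom : ∀ a : ZMod p, a ≠ 0 → ∀ x : K, f (algebraMap (ZMod p) K a * x) = a ^ h * f x)
    (hh : 0 < h) {c : ZMod p} (hc : c ≠ 0) (β : K) :
    walsh p K f (algebraMap (ZMod p) K (c ^ (h - 1)) * β) =
      ∑ x, ZMod.stdAddChar (c ^ h * (f x - Algebra.trace (ZMod p) K (β * x))) := by
  have hc' : algebraMap (ZMod p) K c ≠ 0 := (map_ne_zero _).mpr hc
  rw [walsh_eq_sum_stdAddChar, ← Equiv.sum_comp (Equiv.mulLeft₀ _ hc')]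
  refine Finset.sum_congr rfl fun x _ => ?_
  have harg : algebraMap (ZMod p) K (c ^ (h - 1)) * β * (algebraMap (ZMod p) K c * x) =
      c ^ h • (β * x) := by
    rw [Algebra.smul_def, ← pow_sub_one_mul hh.ne', map_mul]
    ring
  rw [Equiv.mulLeft₀_apply, hhom c hc, harg, map_smul, smul_eq_mul, mul_sub]

end Walsh

open Polynomial

theorem IsPrimitiveRoot.aeval_pow_eq_of_aeval_eq {K : Type*} [Field K] [CharZero K] {ζ : K}
    {n k : ℕ} (hζ : IsPrimitiveRoot ζ n) (hn : 0 < n) (hk : k.Coprime n) {q r : ℚ[X]}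
    (h : aeval ζ q = aeval ζ r) : aeval (ζ ^ k) q = aeval (ζ ^ k) r := by
  have hmin : minpoly ℚ (ζ ^ k) = minpoly ℚ ζ := by
    rw [← cyclotomic_eq_minpoly_rat hζ hn, ← cyclotomic_eq_minpoly_rat (hζ.pow_of_coprime k hk) hn]
  rw [← sub_eq_zero, ← map_sub, ← minpoly.dvd_iff, hmin, minpoly.dvd_iff, map_sub, h, sub_self]

lemma aeval_stdAddChar_pow_val {N : ℕ} [NeZero N] (t j : ZMod N) :
    aeval (ZMod.stdAddChar (1 : ZMod N) ^ t.val) (X ^ j.val : ℚ[X]) = ZMod.stdAddChar (t * j) := by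
  rw [map_pow, aeval_X, ZMod.stdAddChar_mul_eq_pow_val]

section GaussSum

noncomputable def quadGaussSum (p : ℕ) [Fact p.Prime] : ℂ :=
  gaussSum ((quadraticChar (ZMod p)).ringHomComp (Int.castRingHom ℂ)) ZMod.stdAddChar

noncomputable def quadGaussPoly (p : ℕ) [Fact p.Prime] : ℚ[X] :=
  ∑ i : ZMod p, C (quadraticChar (ZMod p) i : ℚ) * X ^ i.val

variable {p : ℕ} [Fact p.Prime]

lemma aeval_quadGaussPoly {t : ZMod p} (ht : t ≠ 0) (hsq : IsSquare t) :
    aeval (ZMod.stdAddChar (1 : ZMod p) ^ t.val) (quadGaussPoly p) = quadGaussSum p := by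
  have hχt : quadraticChar (ZMod p) t = 1 := by
    obtain ⟨c, rfl⟩ := hsq
    rw [← sq, quadraticChar_sq_one' (left_ne_zero_of_mul ht)]
  have hshift := gaussSum_mulShift_eq ((quadraticChar (ZMod p)).ringHomComp (Int.castRingHom ℂ))
    ZMod.stdAddChar (Units.mk0 t ht)
  rw [((quadraticChar_isQuadratic (ZMod p)).comp _).inv] at hshift
  simp only [Units.val_mk0, MulChar.ringHomComp_apply, hχt, map_one, one_mul] at hshift
  rw [quadGaussSum, ← hshift, quadGaussPoly, gaussSum]
  simp [map_sum, aeval_stdAddChar_pow_val]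

lemma quadGaussSum_sq (hp : p ≠ 2) :
    quadGaussSum p ^ 2 = quadraticChar (ZMod p) (-1) * p := by
  have hchar : ringChar (ZMod p) ≠ 2 := by rwa [ZMod.ringChar_zmod_n]
  rw [quadGaussSum, gaussSum_sq ((MulChar.ringHomComp_ne_one_iff (RingHom.injective_int _)).mpr
    (quadraticChar_ne_one hchar)) ((quadraticChar_isQuadratic (ZMod p)).comp _)
    (ZMod.isPrimitive_stdAddChar p), ZMod.card]
  simp

lemma sqrtPstar_sq (hp : p ≠ 2) :
    sqrtPstar p ^ 2 = quadraticChar (ZMod p) (-1) * p := by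
  have hchar : ringChar (ZMod p) ≠ 2 := by rwa [ZMod.ringChar_zmod_n]
  have hsqrt : ((Real.sqrt p : ℝ) : ℂ) ^ 2 = p := by
    rw [← Complex.ofReal_pow, Real.sq_sqrt (Nat.cast_nonneg p), Complex.ofReal_natCast]
  have hodd : p % 2 = 1 := Nat.odd_iff.mp ((Fact.out : p.Prime).odd_of_ne_two hp)
  rw [quadraticChar_neg_one hchar, ZMod.card, sqrtPstar]
  split_ifs with h4
  · simp [ZMod.χ₄_nat_one_mod_four h4, hsqrt]
  · simp [ZMod.χ₄_nat_three_mod_four (n := p) (by omega), mul_pow, hsqrt]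

lemma exists_aeval_eq_sqrtPstar (hp : p ≠ 2) : ∃ R : ℚ[X], ∀ t : ZMod p, t ≠ 0 → IsSquare t →
    aeval (ZMod.stdAddChar (1 : ZMod p) ^ t.val) R = sqrtPstar p := by
  rcases sq_eq_sq_iff_eq_or_eq_neg.mp ((sqrtPstar_sq hp).trans (quadGaussSum_sq hp).symm)
    with h | h
  · exact ⟨quadGaussPoly p, fun t ht hsq => by rw [aeval_quadGaussPoly ht hsq, h]⟩
  · exact ⟨-quadGaussPoly p, fun t ht hsq => by rw [map_neg, aeval_quadGaussPoly ht hsq, h]⟩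

end GaussSum

lemma norm_sqrtPstar (p : ℕ) : ‖sqrtPstar p‖ = Real.sqrt p := by
  rw [sqrtPstar]
  split_ifs <;> simp [abs_of_nonneg (Real.sqrt_nonneg _)]

section WeaklyRegular

variable {p : ℕ} [Fact p.Prime] {K : Type*} [Field K] [Fintype K] [Algebra (ZMod p) K]
  {f : K → ZMod p} {h : ℕ}

theorem walsh_algebraMap_pow_mul_of_eq (hp : p ≠ 2)
    (hhom : ∀ a : ZMod p, a ≠ 0 → ∀ x : K, f (algebraMap (ZMod p) K a * x) = a ^ h * f x)
    (hheven : Even h) (hh : 0 < h) {c : ZMod p} (hc : c ≠ 0) {β : K} {ε : ℤ} {m : ℕ}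
    {v : ZMod p} (hW : walsh p K f β = ε * sqrtPstar p ^ m * xi p v) :
    walsh p K f (algebraMap (ZMod p) K (c ^ (h - 1)) * β) =
      ε * sqrtPstar p ^ m * xi p (c ^ h * v) := by
  obtain ⟨R, hR⟩ := exists_aeval_eq_sqrtPstar hp
  set Q : ℚ[X] := ∑ x : K, X ^ (f x - Algebra.trace (ZMod p) K (β * x)).val
  set S : ℚ[X] := C (ε : ℚ) * R ^ m * X ^ v.val
  have hQ (t : ZMod p) : aeval (ZMod.stdAddChar (1 : ZMod p) ^ t.val) Q =
      ∑ x, ZMod.stdAddChar (t * (f x - Algebra.trace (ZMod p) K (β * x))) := by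
    simp only [Q, map_sum, aeval_stdAddChar_pow_val]
  have hS {t : ZMod p} (ht : t ≠ 0) (hsq : IsSquare t) :
      aeval (ZMod.stdAddChar (1 : ZMod p) ^ t.val) S = ε * sqrtPstar p ^ m * xi p (t * v) := by
    simp [S, hR t ht hsq, aeval_stdAddChar_pow_val, xi_eq_stdAddChar]
  have hζ : aeval (ZMod.stdAddChar (1 : ZMod p)) Q = aeval (ZMod.stdAddChar (1 : ZMod p)) S := by
    have hQ1 := hQ 1
    have hS1 := hS one_ne_zero IsSquare.one
    simp only [ZMod.val_one, pow_one, one_mul] at hQ1 hS1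
    rw [hQ1, hS1, ← hW, walsh_eq_sum_stdAddChar]
  have hch : (c ^ h).val.Coprime p := ZMod.val_coe_unit_coprime (Units.mk0 _ (pow_ne_zero h hc))
  rw [walsh_algebraMap_pow_mul hhom hh hc, ← hQ,
    ZMod.isPrimitiveRoot_stdAddChar_one.aeval_pow_eq_of_aeval_eq (NeZero.pos p) hch hζ,
    hS (pow_ne_zero h hc) (hheven.isSquare_pow c)]

end WeaklyRegular

lemma norm_sq_intCast_mul_sqrtPstar_pow_mul_xi {p : ℕ} [NeZero p] {ε : ℤ} (hε : ε = 1 ∨ ε = -1)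
    (m : ℕ) (v : ZMod p) : ‖(ε : ℂ) * sqrtPstar p ^ m * xi p v‖ ^ 2 = (p : ℝ) ^ m := by
  have hεn : ‖(ε : ℂ)‖ = 1 := by rcases hε with rfl | rfl <;> simp
  rw [norm_mul, norm_mul, norm_pow, hεn, norm_sqrtPstar, xi_eq_stdAddChar, ZMod.norm_stdAddChar,
    one_mul, mul_one, ← pow_mul, mul_comm, pow_mul, Real.sq_sqrt (Nat.cast_nonneg p)]

theorem dual_apply_algebraMap_pow_mul {p : ℕ} [Fact p.Prime] (hp : p ≠ 2)
    {K : Type*} [Field K] [Fintype K] [Algebra (ZMod p) K] {f : K → ZMod p} {h : ℕ}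
    (hhom : ∀ a : ZMod p, a ≠ 0 → ∀ x : K, f (algebraMap (ZMod p) K a * x) = a ^ h * f x)
    (hheven : Even h) (hh : 0 < h) {ε : ℤ} (hε : ε = 1 ∨ ε = -1) {m : ℕ} {g : K → ZMod p}
    (hwr : ∀ β : K, ‖walsh p K f β‖ ^ 2 = (p : ℝ) ^ m →
      walsh p K f β = (ε : ℂ) * sqrtPstar p ^ m * xi p (g β))
    {c : ZMod p} (hc : c ≠ 0) {β : K} (hβ : ‖walsh p K f β‖ ^ 2 = (p : ℝ) ^ m) :
    g (algebraMap (ZMod p) K (c ^ (h - 1)) * β) = c ^ h * g β := by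
  have hW := walsh_algebraMap_pow_mul_of_eq hp hhom hheven hh hc (hwr β hβ)
  have hW' := hwr _ (hW ▸ norm_sq_intCast_mul_sqrtPstar_pow_mul_xi hε m _)
  have hne : (ε : ℂ) * sqrtPstar p ^ m ≠ 0 := by
    refine mul_ne_zero (by rcases hε with rfl | rfl <;> norm_num) (pow_ne_zero _ ?_)
    rw [← norm_ne_zero_iff, norm_sqrtPstar, Real.sqrt_ne_zero']
    exact_mod_cast (Fact.out : p.Prime).pos
  rw [hW, xi_eq_stdAddChar, xi_eq_stdAddChar] at hW'
  exact ZMod.injective_stdAddChar (mul_left_cancel₀ hne hW').symm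

lemma Nat.exists_odd_coprime_mul_modEq_one {m q : ℕ} (hq0 : q ≠ 0) (hq : Even q)
    (hm : m.Coprime q) : ∃ k, Odd k ∧ k.Coprime q ∧ m * k ≡ 1 [MOD q] := by
  have : NeZero q := ⟨hq0⟩
  set u := ZMod.unitOfCoprime m hm
  have hinv : m * (u⁻¹ : (ZMod q)ˣ).val.val ≡ 1 [MOD q] := by
    rw [← ZMod.natCast_eq_natCast_iff, Nat.cast_mul, ZMod.natCast_zmod_val, Nat.cast_one]
    exact u.mul_inv
  refine ⟨_, ?_, ZMod.val_coe_unit_coprime _, hinv⟩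
  have hodd : Odd (m * (u⁻¹ : (ZMod q)ˣ).val.val) := by
    rw [Nat.odd_iff]
    exact hinv.of_dvd (even_iff_two_dvd.mp hq)
  exact (Nat.odd_mul.mp hodd).2

open scoped Classical

theorem stmt_3_general (p n s : ℕ) (hp : p.Prime) (hodd : Odd p)
    (K : Type) [Field K] [Fintype K] [Algebra (ZMod p) K]
    (f : K → ZMod p)
    (h : ℕ) (hheven : Even h) (hhpos : 0 < h) (hhgcd : Nat.gcd (h - 1) (p - 1) = 1)
    (hhom : ∀ a : ZMod p, a ≠ 0 → ∀ x : K,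
      f (algebraMap (ZMod p) K a * x) = a ^ h * f x)
    (ε : ℤ) (hε : ε = 1 ∨ ε = -1)
    (g : K → ZMod p)
    (hwr : ∀ β : K, ‖walsh p K f β‖ ^ 2 = (p : ℝ) ^ (n + s) →
      walsh p K f β = (ε : ℂ) * sqrtPstar p ^ (n + s) * xi p (g β)) :
    ∃ l : ℕ, Even l ∧ 0 < l ∧ Nat.gcd (l - 1) (p - 1) = 1 ∧
      ∀ a : ZMod p, a ≠ 0 → ∀ β : K,
        ‖walsh p K f β‖ ^ 2 = (p : ℝ) ^ (n + s) →
        g (algebraMap (ZMod p) K a * β) = a ^ l * g β := by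
  have := Fact.mk hp
  have hp2 : p ≠ 2 := by rintro rfl; exact Nat.not_odd_iff_even.mpr even_two hodd
  have hp1 : 1 < p - 1 := by have := hp.two_le; omega
  obtain ⟨k, hk_odd, hk_cop, hk_inv⟩ := Nat.exists_odd_coprime_mul_modEq_one (by omega)
    (Nat.Odd.sub_odd hodd odd_one) hhgcd
  refine ⟨k + 1, hk_odd.add_one, k.succ_pos, by simpa using hk_cop, fun a ha β hβ => ?_⟩
  have hroot : (a ^ k) ^ (h - 1) = a := by
    rw [← pow_mul, pow_eq_pow_mod _ (ZMod.pow_card_sub_one_eq_one ha), mul_comm, hk_inv,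
      Nat.one_mod_eq_one.mpr (by omega), pow_one]
  have hpow : (a ^ k) ^ h = a ^ (k + 1) := by
    rw [← pow_sub_one_mul hhpos.ne', hroot, pow_succ', mul_comm]
  simpa [hroot, hpow] using dual_apply_algebraMap_pow_mul hp2 hhom hheven hhpos hε hwr
    (pow_ne_zero k ha) hβ

theorem stmt_3 (p n s : ℕ) (hp : p.Prime) [NeZero p] (hodd : Odd p) (hn : 0 < n) (hs : s ≤ n)
    (K : Type) [Field K] [Fintype K] [DecidableEq K] [Algebra (ZMod p) K]
    (hcard : Fintype.card K = p ^ n)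
    (f : K → ZMod p)
    (hplat : ∀ β : K, ‖walsh p K f β‖ ^ 2 = 0 ∨
      ‖walsh p K f β‖ ^ 2 = (p : ℝ) ^ (n + s))
    (hunbal : walsh p K f 0 ≠ 0)
    (hf0 : f 0 = 0)
    (h : ℕ) (hheven : Even h) (hhpos : 0 < h) (hhgcd : Nat.gcd (h - 1) (p - 1) = 1)
    (hhom : ∀ a : ZMod p, a ≠ 0 → ∀ x : K,
      f (algebraMap (ZMod p) K a * x) = a ^ h * f x)
    (ε : ℤ) (hε : ε = 1 ∨ ε = -1)
    (g : K → ZMod p)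
    (hwr : ∀ β : K, ‖walsh p K f β‖ ^ 2 = (p : ℝ) ^ (n + s) →
      walsh p K f β = (ε : ℂ) * sqrtPstar p ^ (n + s) * xi p (g β)) :
    ∃ l : ℕ, Even l ∧ 0 < l ∧ Nat.gcd (l - 1) (p - 1) = 1 ∧
      ∀ a : ZMod p, a ≠ 0 → ∀ β : K,
        ‖walsh p K f β‖ ^ 2 = (p : ℝ) ^ (n + s) →
        g (algebraMap (ZMod p) K a * β) = a ^ l * g β :=
  stmt_3_general p n s hp hodd K f h hheven hhpos hhgcd hhom ε hε g hwr
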